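/- In Ãₙ, the subgroup N generated by the set P = {pⱼ⁻¹pᵢ : 1 ≤ i, j ≤ n+1} is abelian: any two elements pⱼ₁⁻¹pᵢ₁ and pⱼ₂⁻¹pᵢ₂ commute. -/

import Mathlib

/-!
Conjugation by `pᵢ` sends every generator `a_k` with `k ∉ {i-1, i}` to `a_{k+1}`: write `pᵢ` as
`⋯ a_k a_{k+1} ⋯`, move `a_k` in by commutations and apply the braid relation. Combined with
`p_{j+1} = a_{j+1} pⱼ aⱼ`, this propagates `pᵢ² = p_{i+1} p_{i-1}` around the cycle to
`pᵢ pⱼ = p_{j+1} p_{i-1}` for all `i, j`. With this relation and its inverted form,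
`(pⱼ₁⁻¹ pᵢ₁)(pⱼ₂⁻¹ pᵢ₂) = pⱼ₁⁻¹ p_{j₂+1}⁻¹ p_{i₁+1} pᵢ₂ = pⱼ₂⁻¹ p_{j₁+1}⁻¹ p_{i₂+1} pᵢ₁`, and the
right-hand side is the left-hand side with the two pairs swapped.
-/

open CoxeterMatrix

/-- The affine Coxeter matrix of type Ãₙ on the cyclic index set `ZMod (n+1)`:
`aᵢ² = 1`, `(aᵢa_{i+1})³ = 1`, and non-adjacent generators (mod n+1) commute. -/
def affineA (n : ℕ) : CoxeterMatrix (ZMod (n + 1)) where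
  M := fun i j => if i = j then 1 else if i = j + 1 ∨ j = i + 1 then 3 else 2
  isSymm := by
    ext i j
    by_cases h : i = j
    · simp [Matrix.transpose, Matrix.of_apply, h]
    · simp only [Matrix.transpose, Matrix.of_apply]
      rw [if_neg h, if_neg (Ne.symm h)]
      exact if_congr or_comm rfl rfl
  diagonal := fun i => by simp
  off_diagonal := fun i j h => by
    simp only [if_neg h]
    split <;> simp

/-- The Coxeter generators `aᵢ` of `Ãₙ`. -/
def aa (n : ℕ) (i : ZMod (n + 1)) : (affineA n).Group := (affineA n).simple i

/-- The cyclic products `pⱼ = a_{j+1} a_{j+2} ⋯ a_{j-1}` (indices mod `n+1`). -/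
def pp (n : ℕ) (j : ZMod (n + 1)) : (affineA n).Group :=
  ((List.range n).map fun k => aa n (j + 1 + (k : ℕ))).prod

/-- `gⱼ = pⱼ⁻¹ p_{j+1}`. -/
def gg (n : ℕ) (j : ZMod (n + 1)) : (affineA n).Group := (pp n j)⁻¹ * pp n (j + 1)

/-- The subgroup `N = ⟨pⱼ⁻¹pᵢ : i, j⟩` of `Ãₙ`. -/
def NN (n : ℕ) : Subgroup (affineA n).Group :=
  Subgroup.closure {x | ∃ i j : ZMod (n + 1), x = (pp n j)⁻¹ * pp n i}

/-- The standard parabolic subgroup `⟨a₁,…,aₙ⟩` of `Ãₙ` (all generators except `a_{n+1} = a₀`). -/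
def parab (n : ℕ) : Subgroup (affineA n).Group :=
  Subgroup.closure {x | ∃ i : ZMod (n + 1), i ≠ 0 ∧ x = aa n i}

namespace ZMod

theorem natCast_ne_zero_of_pos_of_lt {m c : ℕ} (h0 : 0 < c) (hm : c < m) : (c : ZMod m) ≠ 0 :=
  fun h => absurd (Nat.le_of_dvd h0 ((natCast_eq_zero_iff c m).1 h)) (by omega)

theorem natCast_self_eq_neg_one (n : ℕ) : (n : ZMod (n + 1)) = -1 :=
  eq_neg_of_add_eq_zero_left (natCast_self' n)

theorem induction_from {m : ℕ} {P : ZMod (m + 1) → Prop} (a : ZMod (m + 1)) (base : P a)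
    (step : ∀ j, j + 1 ≠ a → P j → P (j + 1)) (j : ZMod (m + 1)) : P j := by
  have key : ∀ d ≤ m, P (a + d) := by
    intro d hd
    induction d with
    | zero => simpa using base
    | succ d ih =>
      have hne : a + d + 1 ≠ a := fun h =>
        natCast_ne_zero_of_pos_of_lt (m := m + 1) (c := d + 1) (by omega) (by omega)
          (by push_cast; linear_combination h)
      simpa [add_assoc] using step _ hne (ih (by omega))
  simpa using key (j - a).val (by have := (j - a).val_lt; omega)

end ZMod

section

variable {n : ℕ}

theorem aa_mul_self (i : ZMod (n + 1)) : aa n i * aa n i = 1 :=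
  (affineA n).toCoxeterSystem.simple_mul_simple_self i

theorem aa_braid (hn : 0 < n) (x : ZMod (n + 1)) :
    aa n x * aa n (x + 1) * aa n x = aa n (x + 1) * aa n x * aa n (x + 1) := by
  have hx : x ≠ x + 1 := fun h =>
    ZMod.natCast_ne_zero_of_pos_of_lt (m := n + 1) (c := 1) one_pos (by omega)
      (by push_cast; linear_combination -h)
  have hM : (affineA n).M x (x + 1) = 3 := by simp [affineA, hx]
  have := (affineA n).toCoxeterSystem.wordProd_braidWord_eq x (x + 1)
  simp only [CoxeterSystem.braidWord, (affineA n).symmetric (x + 1) x, hM] at this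
  simpa [CoxeterSystem.alternatingWord, CoxeterSystem.wordProd, aa, mul_assoc] using this.symm

theorem commute_aa_add (x : ZMod (n + 1)) {c : ℕ} (hc : 2 ≤ c) (hcn : c + 1 ≤ n) :
    Commute (aa n x) (aa n (x + c)) := by
  have hne : ∀ d : ℕ, 0 < d → d ≤ n → (d : ZMod (n + 1)) ≠ 0 := fun d h0 hd =>
    ZMod.natCast_ne_zero_of_pos_of_lt h0 (by omega)
  have hM : (affineA n).M x (x + c) = 2 := by
    have h1 : x ≠ x + c := fun h => hne c (by omega) (by omega) (by linear_combination -h)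
    have h2 : x ≠ x + c + 1 := fun h => hne (c + 1) (by omega) (by omega)
      (by push_cast; linear_combination -h)
    have h3 : x + c ≠ x + 1 := fun h => hne (c - 1) (by omega) (by omega)
      (by rw [Nat.cast_sub (by omega)]; push_cast; linear_combination h)
    simp [affineA, h1, h2, h3]
  have := (affineA n).toCoxeterSystem.wordProd_braidWord_eq x (x + c)
  simp only [CoxeterSystem.braidWord, (affineA n).symmetric (x + c) x, hM] at this
  simpa [CoxeterSystem.alternatingWord, CoxeterSystem.wordProd, aa, Commute, SemiconjBy]
    using this

def ascProd (n : ℕ) (j : ZMod (n + 1)) (c : ℕ) : (affineA n).Group :=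
  ((List.range c).map fun k => aa n (j + (k : ℕ))).prod

theorem ascProd_zero (j : ZMod (n + 1)) : ascProd n j 0 = 1 := rfl

theorem ascProd_succ (j : ZMod (n + 1)) (c : ℕ) :
    ascProd n j (c + 1) = ascProd n j c * aa n (j + c) :=
  List.prod_range_succ _ c

theorem ascProd_succ' (j : ZMod (n + 1)) (c : ℕ) :
    ascProd n j (c + 1) = aa n j * ascProd n (j + 1) c := by
  simp only [ascProd, List.prod_range_succ', Nat.cast_zero, add_zero, Nat.cast_succ, add_assoc,
    add_comm (1 : ZMod (n + 1))]

theorem pp_eq_ascProd (i : ZMod (n + 1)) : pp n i = ascProd n (i + 1) n := rfl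

theorem commute_ascProd {x : (affineA n).Group} (j : ZMod (n + 1)) (c : ℕ)
    (h : ∀ k < c, Commute x (aa n (j + k))) : Commute x (ascProd n j c) :=
  Commute.list_prod_right _ _ <| by simpa using h

theorem ascProd_mul_aa (j : ZMod (n + 1)) {t c : ℕ} (htc : t + 2 ≤ c) (hcn : c ≤ n) :
    ascProd n j c * aa n (j + t) = aa n (j + t + 1) * ascProd n j c := by
  induction c, htc using Nat.le_induction with
  | base =>
    have hcomm : Commute (aa n (j + t + 1)) (ascProd n j t) := by
      refine commute_ascProd j t fun k hk => ?_
      have := commute_aa_add (j + k : ZMod (n + 1)) (c := t + 1 - k) (by omega) (by omega)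
      rw [Nat.cast_sub (by omega), add_add_sub_cancel, Nat.cast_succ, ← add_assoc] at this
      exact this.symm
    have hbraid := aa_braid (by omega) (j + t : ZMod (n + 1))
    simp only [ascProd_succ, Nat.cast_succ, ← add_assoc]
    simp only [mul_assoc] at hbraid ⊢
    rw [hbraid, ← mul_assoc _ (aa n _), ← hcomm.eq, mul_assoc]
  | succ c htc ih =>
    have hcomm := commute_aa_add (j + t : ZMod (n + 1)) (c := c - t) (by omega) (by omega)
    rw [Nat.cast_sub (by omega), add_add_sub_cancel] at hcomm
    rw [ascProd_succ, mul_assoc, ← hcomm.eq, ← mul_assoc, ih (by omega), mul_assoc]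

theorem pp_mul_aa_add (i : ZMod (n + 1)) {t : ℕ} (ht : t + 2 ≤ n) :
    pp n i * aa n (i + 1 + t) = aa n (i + 1 + t + 1) * pp n i :=
  ascProd_mul_aa (i + 1) ht le_rfl

theorem pp_mul_aa {i k : ZMod (n + 1)} (hki : k ≠ i) (hki' : k ≠ i - 1) :
    pp n i * aa n k = aa n (k + 1) * pp n i := by
  set t := (k - (i + 1)).val
  have hk : k = i + 1 + t := by simp [t]
  have ht : t + 2 ≤ n := by
    have htn : t < n + 1 := ZMod.val_lt _
    have h1 : t ≠ n := by
      intro h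
      exact hki (by rw [hk, h, ZMod.natCast_self_eq_neg_one]; ring)
    have h2 : t + 1 ≠ n := by
      intro h
      have : ((t + 1 : ℕ) : ZMod (n + 1)) = -1 := h ▸ ZMod.natCast_self_eq_neg_one n
      exact hki' (by rw [hk]; push_cast at this; linear_combination this)
    omega
  rw [hk]
  exact pp_mul_aa_add i ht

theorem pp_mul_ascProd (i : ZMod (n + 1)) {c : ℕ} (hc : c + 1 ≤ n) :
    pp n i * ascProd n (i + 1) c = ascProd n (i + 2) c * pp n i := by
  induction c with
  | zero => simp [ascProd_zero]
  | succ c ih =>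
    have h := pp_mul_aa_add i (t := c) (by omega)
    rw [show i + 1 + c + 1 = i + 2 + c by ring] at h
    rw [ascProd_succ, ascProd_succ, ← mul_assoc, ih (by omega), mul_assoc, h, mul_assoc]

theorem pp_eq_aa_mul (hn : 0 < n) (i : ZMod (n + 1)) :
    pp n i = aa n (i + 1) * ascProd n (i + 2) (n - 1) := by
  have h := ascProd_succ' (i + 1) (n - 1)
  rw [Nat.sub_add_cancel hn, add_assoc, one_add_one_eq_two] at h
  exact h

theorem pp_eq_mul_aa (hn : 0 < n) (i : ZMod (n + 1)) :
    pp n i = ascProd n (i + 1) (n - 1) * aa n (i - 1) := by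
  have h := ascProd_succ (i + 1) (n - 1)
  rw [Nat.sub_add_cancel hn, Nat.cast_sub hn, ZMod.natCast_self_eq_neg_one] at h
  rw [pp_eq_ascProd, h]
  congr 2
  push_cast
  ring

theorem pp_add_one (hn : 0 < n) (i : ZMod (n + 1)) :
    pp n (i + 1) = aa n (i + 1) * pp n i * aa n i := by
  rw [pp_eq_mul_aa hn (i + 1), pp_eq_aa_mul hn i, add_sub_cancel_right, add_assoc i 1 1,
    one_add_one_eq_two, ← mul_assoc, aa_mul_self, one_mul]

theorem pp_mul_self (hn : 0 < n) (i : ZMod (n + 1)) :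
    pp n i * pp n i = pp n (i + 1) * pp n (i - 1) := by
  have h₁ := pp_eq_mul_aa hn i
  have h₂ : pp n (i + 1) = ascProd n (i + 2) (n - 1) * aa n i := by
    rw [pp_eq_mul_aa hn, add_assoc, one_add_one_eq_two, add_sub_cancel_right]
  have h₃ : pp n (i - 1) = aa n i * ascProd n (i + 1) (n - 1) := by
    rw [pp_eq_aa_mul hn, sub_add_cancel, show i - 1 + 2 = i + 1 by ring]
  calc pp n i * pp n i = pp n i * ascProd n (i + 1) (n - 1) * aa n (i - 1) := by
        nth_rw 2 [h₁]; rw [mul_assoc]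
    _ = ascProd n (i + 2) (n - 1) * (pp n i * aa n (i - 1)) := by
        rw [pp_mul_ascProd i (by omega), mul_assoc]
    _ = ascProd n (i + 2) (n - 1) * ascProd n (i + 1) (n - 1) := by
        rw [h₁, mul_assoc, aa_mul_self, mul_one]
    _ = pp n (i + 1) * pp n (i - 1) := by
        rw [h₂, h₃, mul_assoc, ← mul_assoc (aa n i), aa_mul_self, one_mul]

theorem pp_mul_pp_add_one (hn : 0 < n) {i j : ZMod (n + 1)} (hj : j + 1 ≠ i) (hj' : j + 1 + 1 ≠ i)
    (h : pp n i * pp n j = pp n (j + 1) * pp n (i - 1)) :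
    pp n i * pp n (j + 1) = pp n (j + 1 + 1) * pp n (i - 1) := by
  have hi : pp n i * aa n (j + 1) = aa n (j + 1 + 1) * pp n i :=
    pp_mul_aa hj (fun h => hj' (by rw [h]; ring))
  have hi' : pp n (i - 1) * aa n j = aa n (j + 1) * pp n (i - 1) :=
    pp_mul_aa (fun h => hj (by rw [h]; ring)) (fun h => hj' (by rw [h]; ring))
  calc pp n i * pp n (j + 1) = pp n i * aa n (j + 1) * pp n j * aa n j := by
        rw [pp_add_one hn]; simp only [mul_assoc]
    _ = aa n (j + 1 + 1) * (pp n i * pp n j) * aa n j := by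
        rw [hi]; simp only [mul_assoc]
    _ = aa n (j + 1 + 1) * pp n (j + 1) * (pp n (i - 1) * aa n j) := by
        rw [h]; simp only [mul_assoc]
    _ = pp n (j + 1 + 1) * pp n (i - 1) := by
        rw [hi', pp_add_one hn (j + 1)]; simp only [mul_assoc]

theorem pp_mul_pp (hn : 0 < n) (i j : ZMod (n + 1)) :
    pp n i * pp n j = pp n (j + 1) * pp n (i - 1) := by
  refine ZMod.induction_from (P := fun j => pp n i * pp n j = pp n (j + 1) * pp n (i - 1)) i
    (pp_mul_self hn i) (fun j hj h => ?_) j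
  by_cases hj' : j + 1 + 1 = i
  · subst hj'
    simp
  · exact pp_mul_pp_add_one hn hj hj' h

theorem inv_pp_mul_inv_pp (hn : 0 < n) (i j : ZMod (n + 1)) :
    (pp n j)⁻¹ * (pp n i)⁻¹ = (pp n (i - 1))⁻¹ * (pp n (j + 1))⁻¹ := by
  rw [← mul_inv_rev, ← mul_inv_rev, pp_mul_pp hn]

theorem pp_mul_inv_pp (hn : 0 < n) (i j : ZMod (n + 1)) :
    pp n i * (pp n j)⁻¹ = (pp n (j + 1))⁻¹ * pp n (i + 1) := by
  rw [mul_inv_eq_iff_eq_mul, mul_assoc, eq_inv_mul_iff_mul_eq, pp_mul_pp hn (i + 1) j,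
    add_sub_cancel_right]

theorem commute_inv_pp_mul_pp (hn : 0 < n) (i₁ j₁ i₂ j₂ : ZMod (n + 1)) :
    Commute ((pp n j₁)⁻¹ * pp n i₁) ((pp n j₂)⁻¹ * pp n i₂) := by
  have expand : ∀ i j k l : ZMod (n + 1), (pp n j)⁻¹ * pp n i * ((pp n l)⁻¹ * pp n k) =
      (pp n j)⁻¹ * (pp n (l + 1))⁻¹ * (pp n (i + 1) * pp n k) := fun i j k l => by
    rw [mul_assoc, ← mul_assoc (pp n i), pp_mul_inv_pp hn]
    simp only [mul_assoc]
  rw [Commute, SemiconjBy, expand, expand, inv_pp_mul_inv_pp hn (j₂ + 1) j₁,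
    pp_mul_pp hn (i₁ + 1) i₂, add_sub_cancel_right, add_sub_cancel_right]

end

/-- In `Ãₙ`, the subgroup `N` generated by `P = {pⱼ⁻¹pᵢ}` is abelian: any two elements
`pⱼ₁⁻¹pᵢ₁` and `pⱼ₂⁻¹pᵢ₂` commute. -/
theorem stmt8 (n : ℕ) (hn : 2 ≤ n) :
    (∀ i₁ j₁ i₂ j₂ : ZMod (n + 1),
      Commute ((pp n j₁)⁻¹ * pp n i₁) ((pp n j₂)⁻¹ * pp n i₂)) ∧
    (∀ x ∈ NN n, ∀ y ∈ NN n, x * y = y * x) := by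
  have hcomm := commute_inv_pp_mul_pp (n := n) (by omega)
  have : IsMulCommutative (NN n) := Subgroup.isMulCommutative_closure <| by
    rintro _ ⟨i₁, j₁, rfl⟩ _ ⟨i₂, j₂, rfl⟩
    exact hcomm i₁ j₁ i₂ j₂
  exact ⟨hcomm, fun x hx y hy => setLike_mul_comm hx hy⟩
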